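/- arXiv:1205.4648 — 3 statements merged into one kernel-verified Lean document; each statement's English description precedes it below -/
import Mathlib

section
/- Let X be a polyhedral cell complex in ℝ^n of dimension k ≥ 1 such that |X|, the union of all members of X, is a convex set (hence a convex polytope). Let τ ∈ X_{k−1}. If τ is contained in the relative boundary of |X| (the boundary of |X| within its affine hull), then there is exactly one face σ ∈ X_k such that τ is a facet of σ. If τ is not contained in the relative boundary of |X|, then there are exactly two faces σ₁, σ₂ ∈ X_k such that τ is a facet of σ₁ and of σ₂. -/
open Set

noncomputable section

abbrev Euc (n : ℕ) : Type := EuclideanSpace ℝ (Fin n)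

/-- A polytope is the convex hull of a finite set of points. -/
def IsPolytope {n : ℕ} (P : Set (Euc n)) : Prop :=
  ∃ s : Finset (Euc n), P = convexHull ℝ (s : Set (Euc n))

/-- A face of a polytope: the intersection of `P` with a supporting hyperplane. -/
def IsFaceOf {n : ℕ} (F P : Set (Euc n)) : Prop :=
  ∃ (f : Euc n →ₗ[ℝ] ℝ) (c : ℝ), (∀ x ∈ P, f x ≤ c) ∧ F = {x ∈ P | f x = c}

/-- The dimension of a polytope: the dimension of its affine hull. -/
def polyDim {n : ℕ} (P : Set (Euc n)) : ℕ :=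
  Module.finrank ℝ ↥(vectorSpan ℝ P)

/-- A facet of a `k`-dimensional polytope is a face of dimension `k - 1`. -/
def IsFacetOf {n : ℕ} (τ σ : Set (Euc n)) : Prop :=
  IsFaceOf τ σ ∧ polyDim τ + 1 = polyDim σ

/-- A polyhedral cell complex in `ℝⁿ`. -/
structure PolyComplex (n : ℕ) where
  faces : Set (Set (Euc n))
  finite : faces.Finite
  nonempty : ∀ P ∈ faces, P.Nonempty
  isPolytope : ∀ P ∈ faces, IsPolytope P
  face_mem : ∀ P ∈ faces, ∀ F, IsFaceOf F P → F.Nonempty → F ∈ faces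
  inter_face : ∀ P ∈ faces, ∀ Q ∈ faces, (P ∩ Q).Nonempty →
    IsFaceOf (P ∩ Q) P ∧ IsFaceOf (P ∩ Q) Q

/-- `X_k`: the members of `X` of dimension `k`. -/
def PolyComplex.cells {n : ℕ} (X : PolyComplex n) (k : ℕ) : Set (Set (Euc n)) :=
  {σ ∈ X.faces | polyDim σ = k}

/-- `|X|`: the union of all members of `X`. -/
def PolyComplex.support {n : ℕ} (X : PolyComplex n) : Set (Euc n) :=
  ⋃₀ X.faces

/-!
Fix a point `x` in the relative interior of `τ`. The support `|X|` is convex and covered by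
finitely many closed cells, so one cell contains a relatively open subset of `aff |X|`; hence
`aff |X|` has dimension `k` and `aff τ` is the hyperplane `φ (· - x) = 0` in it, for a linear
functional `φ`. A `k`-cell `σ ⊇ τ` has `τ` as a face, so it lies on one side of this hyperplane, and by
convexity it fills that side near `x` within `aff |X|`. Two `k`-cells filling the same side share a
relatively open set, and their intersection, a face of both, is then all of each: they coincide.
So at most two `k`-cells contain `τ`, and there are two exactly when `x` is a relative interior
point of `|X|`. There is at least one, because near `x` every point of `|X|` lies in a cell
containing `x`, hence containing `τ`, and `|X|` has points off `aff τ` arbitrarily close to `x`.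
If `τ` is not in the relative boundary, convexity yields such an `x` in the relative interior of
`|X|`.
-/

open Filter Topology AffineMap

theorem exists_mem_nhdsWithin_of_sUnion_mem_nhdsWithin {α : Type*} [TopologicalSpace α]
    {S : Set α} {F : Set (Set α)} (hF : F.Finite) (hcl : ∀ C ∈ F, IsClosed C) {x : α}
    (hx : x ∈ S) (h : ⋃₀ F ∈ 𝓝[S] x) : ∃ C ∈ F, ∃ z ∈ S, C ∈ 𝓝[S] z := by
  induction F, hF using Set.Finite.induction_on generalizing x with
  | empty => simpa using mem_of_mem_nhdsWithin hx h
  | @insert C F _ _ ih =>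
    by_cases hC : C ∈ 𝓝[S] x
    · exact ⟨C, mem_insert _ _, x, hx, hC⟩
    obtain ⟨y, hyC, hyS, hy⟩ : ∃ y, y ∉ C ∧ y ∈ S ∧ ⋃₀ insert C F ∈ 𝓝[S] y :=
      ((not_eventually.1 hC).and_eventually
        (eventually_mem_nhdsWithin.and (eventually_eventually_nhdsWithin.2 h))).exists
    have hyF : ⋃₀ F ∈ 𝓝[S] y := by
      filter_upwards [hy, mem_nhdsWithin_of_mem_nhds
        ((hcl C (mem_insert _ _)).isOpen_compl.mem_nhds hyC)] with z hz hzC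
      rw [sUnion_insert] at hz
      exact hz.resolve_left hzC
    obtain ⟨D, hD, z, hz, hDz⟩ := ih (fun D hD => hcl D (mem_insert_of_mem _ hD)) hyS hyF
    exact ⟨D, mem_insert_of_mem _ hD, z, hz, hDz⟩

theorem Submodule.exists_dual_inf_ker_eq {K M : Type*} [Field K] [AddCommGroup M] [Module K M]
    {W V : Submodule K M} [FiniteDimensional K V] (hWV : W ≤ V)
    (hdim : Module.finrank K W + 1 = Module.finrank K V) :
    ∃ (φ : M →ₗ[K] K) (v : M), v ∈ V ∧ φ v = 1 ∧ V ⊓ LinearMap.ker φ = W := by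
  obtain ⟨v, hvV, hvW⟩ := SetLike.exists_of_lt (lt_of_le_of_ne hWV fun h => by subst h; omega)
  obtain ⟨f, hfv, hfW⟩ := W.exists_dual_map_eq_bot_of_notMem hvW inferInstance
  set φ := (f v)⁻¹ • f
  have hφv : φ v = 1 := by simp [φ, hfv]
  have hWker : W ≤ V ⊓ LinearMap.ker φ := fun w hw =>
    ⟨hWV hw, by simpa [φ, hfW] using Or.inr (Submodule.mem_map_of_mem (f := f) hw)⟩
  have hlt : V ⊓ LinearMap.ker φ < V :=
    lt_of_le_of_ne inf_le_left fun h => by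
      have hv : v ∈ V ⊓ LinearMap.ker φ := by rw [h]; exact hvV
      simp [hφv] at hv
  have hfin := Submodule.finrank_lt_finrank_of_lt hlt
  exact ⟨φ, v, hvV, hφv, (Submodule.eq_of_le_of_finrank_le hWker (by omega)).symm⟩

theorem eq_or_eq_neg_of_mem_pair {M : Type*} [InvolutiveNeg M] {φ ψ χ : M}
    (hψ : ψ ∈ ({φ, -φ} : Set M)) (hχ : χ ∈ ({φ, -φ} : Set M)) : χ = ψ ∨ χ = -ψ := by
  rcases hψ with rfl | rfl <;> rcases hχ with rfl | rfl <;> simp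

section ConvexGeometry

variable {E : Type*} [NormedAddCommGroup E] [NormedSpace ℝ E]

theorem mem_intrinsicInterior_iff_mem_nhdsWithin {s : Set E} {x : E} :
    x ∈ intrinsicInterior ℝ s ↔ x ∈ s ∧ s ∈ 𝓝[affineSpan ℝ s] x := by
  constructor
  · rintro ⟨y, hy, rfl⟩
    exact ⟨mem_preimage.1 (interior_subset hy),
      preimage_coe_mem_nhds_subtype.1 (mem_interior_iff_mem_nhds.1 hy)⟩
  · rintro ⟨hx, h⟩
    exact ⟨⟨x, subset_affineSpan ℝ s hx⟩,
      mem_interior_iff_mem_nhds.2 (preimage_coe_mem_nhds_subtype.2 h), rfl⟩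

theorem AffineSubspace.mem_of_lineMap_mem {Q : AffineSubspace ℝ E} {x y : E} {t : ℝ}
    (hx : x ∈ Q) (ht : t ≠ 0) (h : lineMap x y t ∈ Q) : y ∈ Q := by
  simpa [lineMap_lineMap_right, inv_mul_cancel₀ ht] using AffineMap.lineMap_mem t⁻¹ hx h

theorem Convex.mem_of_lineMap_mem {s : Set E} (hs : Convex ℝ s) {w y : E} {c : ℝ}
    (hw : w ∈ s) (hc : 1 ≤ c) (h : lineMap w y c ∈ s) : y ∈ s := by
  have hc0 : c ≠ 0 := by positivity
  simpa [lineMap_lineMap_right, inv_mul_cancel₀ hc0] using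
    hs.lineMap_mem hw h ⟨by positivity, inv_le_one_of_one_le₀ hc⟩

theorem tendsto_lineMap_zero (x y : E) : Tendsto (lineMap x y) (𝓝 (0 : ℝ)) (𝓝 x) := by
  simpa using (lineMap_continuous : Continuous (lineMap x y : ℝ →ᵃ[ℝ] E)).tendsto 0

theorem tendsto_lineMap_nhdsWithin {A : AffineSubspace ℝ E} {x y : E} (hx : x ∈ A)
    (hy : y ∈ A) : Tendsto (lineMap x y) (𝓝 (0 : ℝ)) (𝓝[A] x) :=
  tendsto_nhdsWithin_iff.2 ⟨tendsto_lineMap_zero x y,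
    Eventually.of_forall fun t => AffineMap.lineMap_mem t hx hy⟩

theorem tendsto_smul_add_nhdsWithin {A : AffineSubspace ℝ E} {x v : E} (hx : x ∈ A)
    (hv : v ∈ A.direction) : Tendsto (fun t : ℝ => t • v + x) (𝓝 0) (𝓝[A] x) := by
  refine tendsto_nhdsWithin_iff.2 ⟨?_, Eventually.of_forall fun t =>
    AffineSubspace.vadd_mem_of_mem_direction (A.direction.smul_mem t hv) hx⟩
  have hlim : Tendsto (fun t : ℝ => t • v + x) (𝓝 0) (𝓝 ((0 : ℝ) • v + x)) :=
    (continuous_id.smul continuous_const |>.add continuous_const).tendsto 0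
  rwa [zero_smul, zero_add] at hlim

theorem AffineSubspace.le_affineSpan_of_mem_nhdsWithin {A : AffineSubspace ℝ E} {C : Set E}
    {z : E} (hz : z ∈ A) (h : C ∈ 𝓝[A] z) : A ≤ affineSpan ℝ C := by
  intro y hy
  have hev : ∀ᶠ t in 𝓝[≠] (0 : ℝ), lineMap z y t ∈ C :=
    nhdsWithin_le_nhds ((tendsto_lineMap_nhdsWithin hz hy).eventually h)
  obtain ⟨t, htC, ht0⟩ := (hev.and self_mem_nhdsWithin).exists
  exact AffineSubspace.mem_of_lineMap_mem (subset_affineSpan ℝ C (mem_of_mem_nhdsWithin hz h))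
    ht0 (subset_affineSpan ℝ C htC)

theorem mem_intrinsicInterior_of_mem_nhdsWithin {A : AffineSubspace ℝ E} {C : Set E} {z : E}
    (hCA : C ⊆ A) (hz : z ∈ A) (h : C ∈ 𝓝[A] z) : z ∈ intrinsicInterior ℝ C := by
  have hspan : affineSpan ℝ C = A :=
    le_antisymm (affineSpan_le.2 hCA) (AffineSubspace.le_affineSpan_of_mem_nhdsWithin hz h)
  exact mem_intrinsicInterior_iff_mem_nhdsWithin.2 ⟨mem_of_mem_nhdsWithin hz h, hspan ▸ h⟩

theorem Convex.lineMap_mem_intrinsicInterior {s : Set E} (hs : Convex ℝ s) {a b : E}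
    (ha : a ∈ intrinsicInterior ℝ s) (hb : b ∈ s) {t : ℝ} (ht0 : 0 ≤ t) (ht1 : t < 1) :
    lineMap a b t ∈ intrinsicInterior ℝ s := by
  rw [mem_intrinsicInterior_iff_mem_nhdsWithin] at ha ⊢
  set A := affineSpan ℝ s
  have hbA : b ∈ A := subset_affineSpan ℝ s hb
  have h1t : 1 - t ≠ 0 := by linarith
  have hproj : lineMap b (lineMap a b t) (1 - t)⁻¹ = a := by
    rw [← lineMap_apply_one_sub b a t, lineMap_lineMap_right, inv_mul_cancel₀ h1t,
      lineMap_apply_one]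
  have htendsto : Tendsto (fun y => lineMap b y (1 - t)⁻¹) (𝓝[A] (lineMap a b t)) (𝓝[A] a) := by
    refine tendsto_nhdsWithin_iff.2 ⟨?_, eventually_nhdsWithin_of_forall fun y hy =>
      AffineMap.lineMap_mem _ hbA hy⟩
    have hcont : Tendsto (fun y => lineMap b y (1 - t)⁻¹) (𝓝 (lineMap a b t))
        (𝓝 (lineMap b (lineMap a b t) (1 - t)⁻¹)) :=
      tendsto_const_nhds.lineMap tendsto_id tendsto_const_nhds
    rw [hproj] at hcont
    exact hcont.mono_left nhdsWithin_le_nhds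
  refine ⟨hs.lineMap_mem ha.1 hb ⟨ht0, ht1.le⟩, ?_⟩
  filter_upwards [htendsto.eventually ha.2] with y hy
  exact hs.mem_of_lineMap_mem hb (one_le_inv₀ (by linarith) |>.2 (by linarith)) hy

theorem Convex.intrinsicInterior_inter_nonempty {s t : Set E} (hs : Convex ℝ s)
    (ht : Convex ℝ t) {a b : E} (ha : a ∈ intrinsicInterior ℝ s) (hat : a ∈ t)
    (hb : b ∈ intrinsicInterior ℝ t) (hbs : b ∈ s) :
    (intrinsicInterior ℝ s ∩ intrinsicInterior ℝ t).Nonempty := by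
  refine ⟨lineMap a b (1 / 2 : ℝ),
    hs.lineMap_mem_intrinsicInterior ha hbs (by norm_num) (by norm_num), ?_⟩
  rw [← lineMap_apply_one_sub]
  exact ht.lineMap_mem_intrinsicInterior hb hat (by norm_num) (by norm_num)

variable [FiniteDimensional ℝ E]

theorem Convex.mem_nhdsWithin_halfSpace {σ τ : Set E} (hσ : Convex ℝ σ) (hτσ : τ ⊆ σ)
    {A : AffineSubspace ℝ E} {ψ : E →ₗ[ℝ] ℝ} {x w : E}
    (hτ : τ ∈ 𝓝[A ∩ {y | ψ (y - x) = 0}] x) (hwA : w ∈ A) (hwσ : w ∈ σ)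
    (hw : 0 < ψ (w - x)) : σ ∈ 𝓝[A ∩ {y | 0 ≤ ψ (y - x)}] x := by
  set β := ψ (w - x)
  have hψ : Continuous fun y => ψ (y - x) :=
    (LinearMap.continuous_of_finiteDimensional ψ).comp (continuous_id.sub continuous_const)
  have hψx : ψ (x - x) = 0 := by simp
  have hlt : ∀ᶠ y in 𝓝 x, ψ (y - x) < β :=
    hψ.continuousAt.eventually (gt_mem_nhds (by simpa using hw))
  -- `y` lies on the segment from `w` to its central projection `p y` from `w` onto the hyperplane
  set p : E → E := fun y => lineMap w y (β / (β - ψ (y - x)))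
  have hpψ : ∀ y, ψ (y - x) < β → ψ (p y - x) = 0 := by
    intro y hy
    have hne : β - ψ (y - x) ≠ 0 := by linarith
    have hyw : ψ (y - w) = ψ (y - x) - β := by
      rw [← map_sub, sub_sub_sub_cancel_right]
    simp only [p, lineMap_apply, vsub_eq_sub, vadd_eq_add, add_sub_assoc, map_add, map_smul,
      smul_eq_mul, hyw]
    field_simp
    ring
  have hpx : Tendsto p (𝓝 x) (𝓝 x) := by
    have hc : Tendsto (fun y => β / (β - ψ (y - x))) (𝓝 x) (𝓝 (β / (β - ψ (x - x)))) :=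
      tendsto_const_nhds.div (tendsto_const_nhds.sub (hψ.tendsto x)) (by simpa using hw.ne')
    rw [hψx, sub_zero, div_self hw.ne'] at hc
    have hlim := (tendsto_const_nhds (x := w)).lineMap tendsto_id hc
    rwa [lineMap_apply_one] at hlim
  have hpτ : ∀ᶠ y in 𝓝[A ∩ {y | 0 ≤ ψ (y - x)}] x, p y ∈ τ := by
    refine (tendsto_nhdsWithin_iff.2 ⟨hpx.mono_left nhdsWithin_le_nhds, ?_⟩).eventually hτ
    filter_upwards [self_mem_nhdsWithin, nhdsWithin_le_nhds hlt] with y hy hyβ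
    exact ⟨AffineMap.lineMap_mem _ hwA hy.1, hpψ y hyβ⟩
  filter_upwards [hpτ, self_mem_nhdsWithin, nhdsWithin_le_nhds hlt] with y hyτ hy hyβ
  have hy0 : 0 ≤ ψ (y - x) := hy.2
  exact hσ.mem_of_lineMap_mem hwσ ((one_le_div (by linarith)).2 (by linarith)) (hτσ hyτ)

theorem exists_mem_nhdsWithin_of_mem_nhdsWithin_halfSpace {A : AffineSubspace ℝ E}
    {ψ : E →ₗ[ℝ] ℝ} {s : Set E} {x v : E} (hx : x ∈ A) (hv : v ∈ A.direction) (hψv : 0 < ψ v)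
    (hs : s ∈ 𝓝[A ∩ {y | 0 ≤ ψ (y - x)}] x) : ∃ z ∈ A, s ∈ 𝓝[A] z := by
  have hψ : Continuous fun y => ψ (y - x) :=
    (LinearMap.continuous_of_finiteDimensional ψ).comp (continuous_id.sub continuous_const)
  have hψt : ∀ t : ℝ, ψ (t • v + x - x) = t * ψ v := by simp
  have hray : Tendsto (fun t : ℝ => t • v + x) (𝓝[>] 0) (𝓝[A ∩ {y | 0 ≤ ψ (y - x)}] x) := by
    refine tendsto_nhdsWithin_iff.2 ⟨?_, eventually_nhdsWithin_of_forall fun t ht => ?_⟩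
    · exact ((tendsto_smul_add_nhdsWithin hx hv).mono_right nhdsWithin_le_nhds).mono_left
        nhdsWithin_le_nhds
    · refine ⟨AffineSubspace.vadd_mem_of_mem_direction (A.direction.smul_mem t hv) hx, ?_⟩
      show 0 ≤ ψ (t • v + x - x)
      rw [hψt]
      exact mul_nonneg (le_of_lt ht) hψv.le
  obtain ⟨t, hts, ht⟩ :=
    ((hray.eventually (eventually_eventually_nhdsWithin.2 hs)).and self_mem_nhdsWithin).exists
  -- off the boundary hyperplane, the half-space is a neighbourhood and can be dropped
  have hpos : {y | 0 ≤ ψ (y - x)} ∈ 𝓝 (t • v + x) := by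
    refine mem_of_superset (hψ.isOpen_preimage _ isOpen_Ioi |>.mem_nhds ?_)
      fun y (hy : 0 < ψ (y - x)) => hy.le
    simpa [hψt] using mul_pos ht hψv
  refine ⟨t • v + x, AffineSubspace.vadd_mem_of_mem_direction (A.direction.smul_mem t hv) hx, ?_⟩
  rwa [← nhdsWithin_inter_of_mem' (mem_nhdsWithin_of_mem_nhds hpos)]

end ConvexGeometry

section Polytopes

variable {n : ℕ}

theorem IsPolytope.convex {P : Set (Euc n)} (h : IsPolytope P) : Convex ℝ P := by
  obtain ⟨s, rfl⟩ := h
  exact convex_convexHull ℝ (s : Set (Euc n))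

theorem IsPolytope.isClosed {P : Set (Euc n)} (h : IsPolytope P) : IsClosed P := by
  obtain ⟨s, rfl⟩ := h
  exact (s.finite_toSet.isCompact_convexHull (𝕜 := ℝ)).isClosed

theorem IsFaceOf.subset {F P : Set (Euc n)} (h : IsFaceOf F P) : F ⊆ P := by
  obtain ⟨f, c, -, rfl⟩ := h
  exact sep_subset P _

theorem IsFaceOf.eq_of_mem_intrinsicInterior {F P : Set (Euc n)} (hF : IsFaceOf F P)
    {x : Euc n} (hxF : x ∈ F) (hx : x ∈ intrinsicInterior ℝ P) : F = P := by
  obtain ⟨f, c, hf, rfl⟩ := hF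
  obtain ⟨hxP, hP⟩ := mem_intrinsicInterior_iff_mem_nhdsWithin.1 hx
  refine subset_antisymm (sep_subset P _) fun y hy => ⟨hy, le_antisymm (hf y hy) ?_⟩
  -- prolong the segment from `y` to `x` slightly beyond `x`
  have hev : ∀ᶠ t in 𝓝[<] (0 : ℝ), lineMap x y t ∈ P := nhdsWithin_le_nhds <|
    (tendsto_lineMap_nhdsWithin (subset_affineSpan ℝ P hxP)
      (subset_affineSpan ℝ P hy)).eventually hP
  obtain ⟨t, htP, ht⟩ := (hev.and self_mem_nhdsWithin).exists
  have hft := hf _ htP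
  simp only [lineMap_apply_module, map_add, map_smul, smul_eq_mul, hxF.2] at hft
  nlinarith [show t < 0 from ht]

theorem IsFaceOf.exists_halfSpace {τ σ : Set (Euc n)} (hface : IsFaceOf τ σ) (hne : τ ≠ σ)
    {x : Euc n} (hx : x ∈ τ) {V : Submodule ℝ (Euc n)} (hσV : ∀ y ∈ σ, y - x ∈ V)
    {φ : Euc n →ₗ[ℝ] ℝ} {v : Euc n} (hv : v ∈ V) (hφv : φ v = 1)
    (hφ : V ⊓ LinearMap.ker φ ≤ vectorSpan ℝ τ) :
    ∃ ψ ∈ ({φ, -φ} : Set (Euc n →ₗ[ℝ] ℝ)), (∃ w ∈ σ, 0 < ψ (w - x)) ∧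
      ∀ y ∈ σ, 0 ≤ ψ (y - x) := by
  obtain ⟨g, c, hg, rfl⟩ := hface
  have hgτ : vectorSpan ℝ {y ∈ σ | g y = c} ≤ LinearMap.ker g := by
    rw [vectorSpan_def, Submodule.span_le]
    rintro _ ⟨a, ha, b, hb, rfl⟩
    simp [ha.2, hb.2]
  -- on `V`, both `g` and `φ` vanish on the hyperplane `V ⊓ ker φ`, so they are proportional
  have hgV : ∀ z ∈ V, g z = φ z * g v := by
    intro z hz
    have hker : z - φ z • v ∈ V ⊓ LinearMap.ker φ :=
      ⟨V.sub_mem hz (V.smul_mem _ hv), by simp [hφv]⟩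
    have := hgτ (hφ hker)
    simp only [LinearMap.mem_ker, map_sub, map_smul, smul_eq_mul] at this
    linarith
  have hgσ : ∀ y ∈ σ, g y - c = φ (y - x) * g v := fun y hy => by
    rw [← hgV _ (hσV y hy), map_sub, hx.2]
  obtain ⟨w, hwσ, hwτ⟩ : ∃ w ∈ σ, w ∉ {y ∈ σ | g y = c} :=
    not_subset.1 fun h => hne (subset_antisymm (sep_subset _ _) h)
  have hw : φ (w - x) * g v < 0 := by
    rw [← hgσ w hwσ]
    exact sub_neg.2 (lt_of_le_of_ne (hg w hwσ) fun h => hwτ ⟨hwσ, h⟩)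
  rcases lt_or_gt_of_ne (show g v ≠ 0 by rintro h; simp [h] at hw) with hgv | hgv
  · exact ⟨φ, by simp, ⟨w, hwσ, by nlinarith⟩, fun y hy => by nlinarith [hg y hy, hgσ y hy]⟩
  · refine ⟨-φ, by simp, ⟨w, hwσ, ?_⟩, fun y hy => ?_⟩
    · simp only [LinearMap.neg_apply]
      nlinarith
    · simp only [LinearMap.neg_apply]
      nlinarith [hg y hy, hgσ y hy]

theorem subset_affineSpan_of_polyDim_le {s t : Set (Euc n)} (hs : s.Nonempty) (hst : s ⊆ t)
    (h : polyDim t ≤ polyDim s) : t ⊆ affineSpan ℝ s := by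
  have hdir : vectorSpan ℝ s = vectorSpan ℝ t :=
    Submodule.eq_of_le_of_finrank_le (vectorSpan_mono ℝ hst) h
  have hspan : affineSpan ℝ s = affineSpan ℝ t :=
    AffineSubspace.eq_of_direction_eq_of_nonempty_of_le
      (by rw [direction_affineSpan, direction_affineSpan, hdir])
      ((affineSpan_nonempty ℝ).2 hs) (affineSpan_mono ℝ hst)
  exact hspan ▸ subset_affineSpan ℝ t

theorem polyDim_le_of_subset_affineSpan {s t : Set (Euc n)} (h : t ⊆ affineSpan ℝ s) :
    polyDim t ≤ polyDim s := by
  have := AffineSubspace.direction_le (affineSpan_le.2 h)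
  rw [direction_affineSpan, direction_affineSpan] at this
  exact Submodule.finrank_mono this

end Polytopes
namespace PolyComplex

variable {n k : ℕ} (X : PolyComplex n)

theorem subset_support {P : Set (Euc n)} (hP : P ∈ X.faces) : P ⊆ X.support :=
  subset_sUnion_of_mem hP

theorem subset_affineSpan_support {P : Set (Euc n)} (hP : P ∈ X.faces) :
    P ⊆ affineSpan ℝ X.support :=
  (X.subset_support hP).trans (subset_affineSpan ℝ _)

theorem isFaceOf_of_subset {τ σ : Set (Euc n)} (hτ : τ ∈ X.faces) (hσ : σ ∈ X.faces)
    (hτσ : τ ⊆ σ) : IsFaceOf τ σ := by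
  have := (X.inter_face σ hσ τ hτ ((X.nonempty τ hτ).mono (subset_inter hτσ subset_rfl))).1
  rwa [inter_eq_right.2 hτσ] at this

theorem isFacetOf_iff_subset (hk : 1 ≤ k) {τ σ : Set (Euc n)} (hτ : τ ∈ X.cells (k - 1))
    (hσ : σ ∈ X.cells k) : IsFacetOf τ σ ↔ τ ⊆ σ :=
  ⟨fun h => h.1.subset, fun h => ⟨X.isFaceOf_of_subset hτ.1 hσ.1 h, by rw [hτ.2, hσ.2]; omega⟩⟩

theorem subset_of_mem_intrinsicInterior {τ P : Set (Euc n)} (hτ : τ ∈ X.faces)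
    (hP : P ∈ X.faces) {x : Euc n} (hx : x ∈ intrinsicInterior ℝ τ) (hxP : x ∈ P) : τ ⊆ P := by
  have hxτ := intrinsicInterior_subset hx
  exact inter_eq_left.1 ((X.inter_face τ hτ P hP ⟨x, hxτ, hxP⟩).1.eq_of_mem_intrinsicInterior
    ⟨hxτ, hxP⟩ hx)

theorem eq_of_inter_mem_nhdsWithin {σ₁ σ₂ : Set (Euc n)} (h₁ : σ₁ ∈ X.faces)
    (h₂ : σ₂ ∈ X.faces) {A : AffineSubspace ℝ (Euc n)} (hA₁ : σ₁ ⊆ A) (hA₂ : σ₂ ⊆ A)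
    {z : Euc n} (hz : z ∈ A) (h : σ₁ ∩ σ₂ ∈ 𝓝[A] z) : σ₁ = σ₂ := by
  have key : ∀ {P Q}, P ∈ X.faces → Q ∈ X.faces → P ⊆ A → P ∩ Q ∈ 𝓝[A] z → P ⊆ Q := by
    intro P Q hP hQ hPA hPQ
    have hzPQ := mem_of_mem_nhdsWithin hz hPQ
    have hzP := mem_intrinsicInterior_of_mem_nhdsWithin hPA hz
      (mem_of_superset hPQ inter_subset_left)
    exact inter_eq_left.1
      ((X.inter_face P hP Q hQ ⟨z, hzPQ⟩).1.eq_of_mem_intrinsicInterior hzPQ hzP)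
  exact subset_antisymm (key h₁ h₂ hA₁ h) (key h₂ h₁ hA₂ (inter_comm σ₁ σ₂ ▸ h))

theorem polyDim_support_le (hdim_le : ∀ σ ∈ X.faces, polyDim σ ≤ k)
    (hconv : Convex ℝ X.support) : polyDim X.support ≤ k := by
  rcases X.support.eq_empty_or_nonempty with hemp | hne
  · rw [polyDim, hemp, vectorSpan_empty, finrank_bot]
    exact k.zero_le
  obtain ⟨x, hx⟩ := hne.intrinsicInterior hconv
  obtain ⟨hxs, hnhds⟩ := mem_intrinsicInterior_iff_mem_nhdsWithin.1 hx
  obtain ⟨C, hC, z, hz, hCz⟩ := exists_mem_nhdsWithin_of_sUnion_mem_nhdsWithin X.finite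
    (fun C hC => (X.isPolytope C hC).isClosed) (subset_affineSpan ℝ _ hxs) hnhds
  calc polyDim X.support ≤ polyDim C := polyDim_le_of_subset_affineSpan
        ((subset_affineSpan ℝ _).trans (AffineSubspace.le_affineSpan_of_mem_nhdsWithin hz hCz))
    _ ≤ k := hdim_le C hC

theorem polyDim_support (hdim_le : ∀ σ ∈ X.faces, polyDim σ ≤ k)
    (hdim_eq : ∃ σ ∈ X.faces, polyDim σ = k) (hconv : Convex ℝ X.support) :
    polyDim X.support = k := by
  obtain ⟨σ, hσ, rfl⟩ := hdim_eq
  exact le_antisymm (X.polyDim_support_le hdim_le hconv)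
    (polyDim_le_of_subset_affineSpan (X.subset_affineSpan_support hσ))

variable {τ : Set (Euc n)} {x : Euc n}

theorem eventually_exists_cells_superset (hdim_le : ∀ σ ∈ X.faces, polyDim σ ≤ k)
    (hτ : τ ∈ X.cells (k - 1)) (hx : x ∈ intrinsicInterior ℝ τ) :
    ∀ᶠ y in 𝓝 x, y ∈ X.support → y ∉ affineSpan ℝ τ → ∃ σ ∈ X.cells k, τ ⊆ σ ∧ y ∈ σ := by
  -- near `x`, only the cells through `x` meet the support, and these contain `τ`
  have hcl : IsClosed (⋃₀ {P ∈ X.faces | x ∉ P}) := by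
    rw [sUnion_eq_biUnion]
    exact (X.finite.subset (sep_subset _ _)).isClosed_biUnion fun P hP =>
      (X.isPolytope P hP.1).isClosed
  filter_upwards [hcl.isOpen_compl.mem_nhds fun ⟨P, hP, hxP⟩ => hP.2 hxP]
    with y hy ⟨P, hP, hyP⟩ hyτ
  have hxP : x ∈ P := by_contra fun hxP => hy ⟨P, ⟨hP, hxP⟩, hyP⟩
  have hτP := X.subset_of_mem_intrinsicInterior hτ.1 hP hx hxP
  refine ⟨P, ⟨hP, le_antisymm (hdim_le P hP) ?_⟩, hτP, hyP⟩
  by_contra hlt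
  exact hyτ (subset_affineSpan_of_polyDim_le (X.nonempty τ hτ.1) hτP (by rw [hτ.2]; omega) hyP)

theorem exists_cells_superset (hk : 1 ≤ k) (hdim_le : ∀ σ ∈ X.faces, polyDim σ ≤ k)
    (hsupp : polyDim X.support = k) (hconv : Convex ℝ X.support) (hτ : τ ∈ X.cells (k - 1))
    (hx : x ∈ intrinsicInterior ℝ τ) : ∃ σ ∈ X.cells k, τ ⊆ σ := by
  have hxτ := intrinsicInterior_subset hx
  obtain ⟨w, hw, hwτ⟩ : ∃ w ∈ X.support, w ∉ affineSpan ℝ τ := not_subset.1 fun h => by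
    have := polyDim_le_of_subset_affineSpan h
    rw [hsupp, hτ.2] at this
    omega
  have hev : ∀ᶠ t in 𝓝[>] (0 : ℝ), lineMap x w t ∈ X.support →
      lineMap x w t ∉ affineSpan ℝ τ → ∃ σ ∈ X.cells k, τ ⊆ σ ∧ lineMap x w t ∈ σ :=
    nhdsWithin_le_nhds <|
      (tendsto_lineMap_zero x w).eventually (X.eventually_exists_cells_superset hdim_le hτ hx)
  obtain ⟨t, hσ, ht⟩ := (hev.and (Ioo_mem_nhdsGT zero_lt_one)).exists
  obtain ⟨σ, hσ, hτσ, -⟩ :=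
    hσ (hconv.lineMap_mem (X.subset_support hτ.1 hxτ) hw ⟨ht.1.le, ht.2.le⟩)
      fun h => hwτ (AffineSubspace.mem_of_lineMap_mem (subset_affineSpan ℝ τ hxτ) ht.1.ne' h)
  exact ⟨σ, hσ, hτσ⟩

variable {φ : Euc n →ₗ[ℝ] ℝ} {v : Euc n}

theorem exists_halfSpace_mem_nhdsWithin (hk : 1 ≤ k) (hτ : τ ∈ X.cells (k - 1))
    (hx : x ∈ intrinsicInterior ℝ τ) (hv : v ∈ vectorSpan ℝ X.support) (hφv : φ v = 1)
    (hφ : vectorSpan ℝ X.support ⊓ LinearMap.ker φ = vectorSpan ℝ τ) {σ : Set (Euc n)}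
    (hσ : σ ∈ X.cells k) (hτσ : τ ⊆ σ) :
    ∃ ψ ∈ ({φ, -φ} : Set (Euc n →ₗ[ℝ] ℝ)), (∀ y ∈ σ, 0 ≤ ψ (y - x)) ∧
      σ ∈ 𝓝[affineSpan ℝ X.support ∩ {y | 0 ≤ ψ (y - x)}] x := by
  have hxτ := intrinsicInterior_subset hx
  have hne : τ ≠ σ := fun h => by
    have := hτ.2
    rw [h, hσ.2] at this
    omega
  have hσV : ∀ y ∈ σ, y - x ∈ vectorSpan ℝ X.support := fun y hy =>
    vsub_mem_vectorSpan ℝ (X.subset_support hσ.1 hy) (X.subset_support hσ.1 (hτσ hxτ))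
  obtain ⟨ψ, hψ, ⟨w, hwσ, hw⟩, hσψ⟩ :=
    (X.isFaceOf_of_subset hτ.1 hσ.1 hτσ).exists_halfSpace hne hxτ hσV hv hφv hφ.le
  refine ⟨ψ, hψ, hσψ, (X.isPolytope σ hσ.1).convex.mem_nhdsWithin_halfSpace hτσ ?_
    (X.subset_affineSpan_support hσ.1 hwσ) hwσ hw⟩
  have hsub : (affineSpan ℝ X.support : Set (Euc n)) ∩ {y | ψ (y - x) = 0} ⊆
      affineSpan ℝ τ := by
    rintro y ⟨hyA, hy⟩
    have hφy : φ (y - x) = 0 := by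
      rcases hψ with rfl | rfl
      exacts [hy, neg_eq_zero.1 hy]
    have hyx : y - x ∈ vectorSpan ℝ τ := hφ ▸ ⟨by
      simpa [direction_affineSpan] using
        AffineSubspace.vsub_mem_direction hyA (X.subset_affineSpan_support hτ.1 hxτ), hφy⟩
    rw [SetLike.mem_coe, ← AffineSubspace.vsub_right_mem_direction_iff_mem
      (subset_affineSpan ℝ τ hxτ), direction_affineSpan]
    exact hyx
  exact nhdsWithin_mono x hsub (mem_intrinsicInterior_iff_mem_nhdsWithin.1 hx).2

theorem eq_of_mem_nhdsWithin_halfSpace {σ₁ σ₂ : Set (Euc n)} (h₁ : σ₁ ∈ X.faces)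
    (h₂ : σ₂ ∈ X.faces) (hx : x ∈ X.support) (hv : v ∈ vectorSpan ℝ X.support) (hφv : φ v = 1)
    {ψ : Euc n →ₗ[ℝ] ℝ} (hψ : ψ ∈ ({φ, -φ} : Set (Euc n →ₗ[ℝ] ℝ)))
    (hσ₁ : σ₁ ∈ 𝓝[affineSpan ℝ X.support ∩ {y | 0 ≤ ψ (y - x)}] x)
    (hσ₂ : σ₂ ∈ 𝓝[affineSpan ℝ X.support ∩ {y | 0 ≤ ψ (y - x)}] x) : σ₁ = σ₂ := by
  obtain ⟨u, hu, hψu⟩ : ∃ u ∈ vectorSpan ℝ X.support, 0 < ψ u := by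
    rcases hψ with rfl | rfl
    exacts [⟨v, hv, by simp [hφv]⟩, ⟨-v, neg_mem hv, by simp [hφv]⟩]
  obtain ⟨z, hz, hzσ⟩ := exists_mem_nhdsWithin_of_mem_nhdsWithin_halfSpace
    (subset_affineSpan ℝ _ hx) (by rwa [direction_affineSpan]) hψu (inter_mem hσ₁ hσ₂)
  exact X.eq_of_inter_mem_nhdsWithin h₁ h₂ (X.subset_affineSpan_support h₁)
    (X.subset_affineSpan_support h₂) hz hzσ

theorem mem_intrinsicInterior_support_of_ne (hk : 1 ≤ k) (hτ : τ ∈ X.cells (k - 1))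
    (hx : x ∈ intrinsicInterior ℝ τ) (hv : v ∈ vectorSpan ℝ X.support) (hφv : φ v = 1)
    (hφ : vectorSpan ℝ X.support ⊓ LinearMap.ker φ = vectorSpan ℝ τ) {σ₁ σ₂ : Set (Euc n)}
    (hσ₁ : σ₁ ∈ X.cells k) (hτσ₁ : τ ⊆ σ₁) (hσ₂ : σ₂ ∈ X.cells k) (hτσ₂ : τ ⊆ σ₂)
    (hne : σ₁ ≠ σ₂) : x ∈ intrinsicInterior ℝ X.support := by
  obtain ⟨ψ, hψ, -, h₁⟩ := X.exists_halfSpace_mem_nhdsWithin hk hτ hx hv hφv hφ hσ₁ hτσ₁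
  obtain ⟨ψ₂, hψ₂, -, h₂⟩ := X.exists_halfSpace_mem_nhdsWithin hk hτ hx hv hφv hφ hσ₂ hτσ₂
  have hxs : x ∈ X.support := X.subset_support hτ.1 (intrinsicInterior_subset hx)
  rcases eq_or_eq_neg_of_mem_pair hψ hψ₂ with rfl | rfl
  · exact absurd (X.eq_of_mem_nhdsWithin_halfSpace hσ₁.1 hσ₂.1 hxs hv hφv hψ h₁ h₂) hne
  set A : Set (Euc n) := (affineSpan ℝ X.support : Set (Euc n))
  have hcover : A ⊆ (A ∩ {y | 0 ≤ ψ (y - x)}) ∪ (A ∩ {y | 0 ≤ (-ψ) (y - x)}) := fun y hy =>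
    (le_total 0 (ψ (y - x))).imp (fun h => ⟨hy, h⟩) fun h => ⟨hy, by simpa using h⟩
  refine mem_intrinsicInterior_iff_mem_nhdsWithin.2 ⟨hxs, nhdsWithin_mono x hcover ?_⟩
  rw [nhdsWithin_union]
  exact mem_of_superset (union_mem_sup h₁ h₂)
    (union_subset (X.subset_support hσ₁.1) (X.subset_support hσ₂.1))

theorem eq_or_eq_of_ne (hk : 1 ≤ k) (hτ : τ ∈ X.cells (k - 1))
    (hx : x ∈ intrinsicInterior ℝ τ) (hv : v ∈ vectorSpan ℝ X.support) (hφv : φ v = 1)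
    (hφ : vectorSpan ℝ X.support ⊓ LinearMap.ker φ = vectorSpan ℝ τ) {σ₁ σ₂ σ : Set (Euc n)}
    (hσ₁ : σ₁ ∈ X.cells k) (hτσ₁ : τ ⊆ σ₁) (hσ₂ : σ₂ ∈ X.cells k) (hτσ₂ : τ ⊆ σ₂)
    (hne : σ₁ ≠ σ₂) (hσ : σ ∈ X.cells k) (hτσ : τ ⊆ σ) : σ = σ₁ ∨ σ = σ₂ := by
  obtain ⟨ψ₁, hψ₁, -, h₁⟩ := X.exists_halfSpace_mem_nhdsWithin hk hτ hx hv hφv hφ hσ₁ hτσ₁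
  obtain ⟨ψ₂, hψ₂, -, h₂⟩ := X.exists_halfSpace_mem_nhdsWithin hk hτ hx hv hφv hφ hσ₂ hτσ₂
  obtain ⟨ψ, hψ, -, h⟩ := X.exists_halfSpace_mem_nhdsWithin hk hτ hx hv hφv hφ hσ hτσ
  have hxs : x ∈ X.support := X.subset_support hτ.1 (intrinsicInterior_subset hx)
  rcases eq_or_eq_neg_of_mem_pair hψ₁ hψ with rfl | rfl
  · exact Or.inl (X.eq_of_mem_nhdsWithin_halfSpace hσ.1 hσ₁.1 hxs hv hφv hψ h h₁)
  rcases eq_or_eq_neg_of_mem_pair hψ₁ hψ₂ with rfl | rfl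
  · exact absurd (X.eq_of_mem_nhdsWithin_halfSpace hσ₁.1 hσ₂.1 hxs hv hφv hψ₁ h₁ h₂) hne
  · exact Or.inr (X.eq_of_mem_nhdsWithin_halfSpace hσ.1 hσ₂.1 hxs hv hφv hψ h h₂)

theorem exists_ne_of_mem_intrinsicInterior_support (hk : 1 ≤ k)
    (hdim_le : ∀ σ ∈ X.faces, polyDim σ ≤ k) (hτ : τ ∈ X.cells (k - 1))
    (hx : x ∈ intrinsicInterior ℝ τ) (hv : v ∈ vectorSpan ℝ X.support) (hφv : φ v = 1)
    (hφ : vectorSpan ℝ X.support ⊓ LinearMap.ker φ = vectorSpan ℝ τ)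
    (hxX : x ∈ intrinsicInterior ℝ X.support) :
    ∃ σ₁ σ₂, σ₁ ∈ X.cells k ∧ σ₂ ∈ X.cells k ∧ σ₁ ≠ σ₂ ∧ τ ⊆ σ₁ ∧ τ ⊆ σ₂ := by
  obtain ⟨hxs, hnhds⟩ := mem_intrinsicInterior_iff_mem_nhdsWithin.1 hxX
  have hxτ := intrinsicInterior_subset hx
  have hlim := tendsto_smul_add_nhdsWithin (subset_affineSpan ℝ _ hxs)
    (by rwa [direction_affineSpan] : v ∈ (affineSpan ℝ X.support).direction)
  have hoff : ∀ s : ℝ, s ≠ 0 → s • v + x ∉ affineSpan ℝ τ := fun s hs h => by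
    have hsv : s • v ∈ vectorSpan ℝ τ := by
      simpa [direction_affineSpan] using
        AffineSubspace.vsub_mem_direction h (subset_affineSpan ℝ τ hxτ)
    rw [← hφ] at hsv
    have h0 : φ (s • v) = 0 := hsv.2
    simp [hφv, hs] at h0
  have hev : ∀ᶠ s in 𝓝 (0 : ℝ), s ≠ 0 → ∃ σ ∈ X.cells k, τ ⊆ σ ∧ s • v + x ∈ σ := by
    filter_upwards [hlim.eventually hnhds, (hlim.mono_right nhdsWithin_le_nhds).eventually
      (X.eventually_exists_cells_superset hdim_le hτ hx)] with s hs hσ hs0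
    exact hσ hs (hoff s hs0)
  have hev' : ∀ᶠ s in 𝓝[>] (0 : ℝ), (s ≠ 0 → ∃ σ ∈ X.cells k, τ ⊆ σ ∧ s • v + x ∈ σ) ∧
      (-s ≠ 0 → ∃ σ ∈ X.cells k, τ ⊆ σ ∧ (-s) • v + x ∈ σ) :=
    nhdsWithin_le_nhds (hev.and ((continuous_neg.tendsto' (0 : ℝ) 0 neg_zero).eventually hev))
  obtain ⟨t, ⟨hpos, hneg⟩, ht⟩ := (hev'.and self_mem_nhdsWithin).exists
  have ht : (0 : ℝ) < t := ht
  obtain ⟨σ₁, hσ₁, hτσ₁, h₁⟩ := hpos ht.ne'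
  obtain ⟨σ₂, hσ₂, hτσ₂, h₂⟩ := hneg (neg_ne_zero.2 ht.ne')
  refine ⟨σ₁, σ₂, hσ₁, hσ₂, ?_, hτσ₁, hτσ₂⟩
  -- a single cell cannot contain points on both sides of the hyperplane
  rintro rfl
  obtain ⟨ψ, hψ, hσψ, -⟩ := X.exists_halfSpace_mem_nhdsWithin hk hτ hx hv hφv hφ hσ₁ hτσ₁
  have h₁' := hσψ _ h₁
  have h₂' := hσψ _ h₂
  rcases hψ with rfl | rfl <;> simp [hφv] at h₁' h₂' <;> linarith

end PolyComplex

theorem statement0 {n k : ℕ} (hk : 1 ≤ k) (X : PolyComplex n)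
    (hdim_le : ∀ σ ∈ X.faces, polyDim σ ≤ k)
    (hdim_eq : ∃ σ ∈ X.faces, polyDim σ = k)
    (hconv : Convex ℝ X.support)
    (τ : Set (Euc n)) (hτ : τ ∈ X.cells (k - 1)) :
    (τ ⊆ intrinsicFrontier ℝ X.support →
      ∃! σ, σ ∈ X.cells k ∧ IsFacetOf τ σ) ∧
    (¬ τ ⊆ intrinsicFrontier ℝ X.support →
      ∃ σ₁ σ₂, σ₁ ∈ X.cells k ∧ σ₂ ∈ X.cells k ∧ σ₁ ≠ σ₂ ∧
        IsFacetOf τ σ₁ ∧ IsFacetOf τ σ₂ ∧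
        ∀ σ ∈ X.cells k, IsFacetOf τ σ → σ = σ₁ ∨ σ = σ₂) := by
  have hsupp := X.polyDim_support hdim_le hdim_eq hconv
  have hτconv := (X.isPolytope τ hτ.1).convex
  have hfacet := fun {σ} (hσ : σ ∈ X.cells k) => X.isFacetOf_iff_subset hk hτ hσ
  obtain ⟨φ, v, hv, hφv, hφ⟩ := Submodule.exists_dual_inf_ker_eq
    (vectorSpan_mono ℝ (X.subset_support hτ.1))
    (show polyDim τ + 1 = polyDim X.support by rw [hτ.2, hsupp]; omega)
  obtain ⟨a, ha⟩ := (X.nonempty τ hτ.1).intrinsicInterior hτconv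
  refine ⟨fun hbd => ?_, fun hbd => ?_⟩
  · obtain ⟨σ, hσ, hτσ⟩ := X.exists_cells_superset hk hdim_le hsupp hconv hτ ha
    refine ⟨σ, ⟨hσ, (hfacet hσ).2 hτσ⟩, fun σ' ⟨hσ', hf⟩ => by_contra fun hne => ?_⟩
    have hint := X.mem_intrinsicInterior_support_of_ne hk hτ ha hv hφv hφ hσ'
      ((hfacet hσ').1 hf) hσ hτσ hne
    have hfr := hbd (intrinsicInterior_subset ha)
    rw [← closure_sdiff_intrinsicInterior] at hfr
    exact hfr.2 hint
  · obtain ⟨b, hbτ, hb⟩ := not_subset.1 hbd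
    have hbX : b ∈ intrinsicInterior ℝ X.support := by
      rw [← closure_sdiff_intrinsicFrontier]
      exact ⟨subset_closure (X.subset_support hτ.1 hbτ), hb⟩
    obtain ⟨x, hx, hxX⟩ := hτconv.intrinsicInterior_inter_nonempty hconv ha
      (X.subset_support hτ.1 (intrinsicInterior_subset ha)) hbX hbτ
    obtain ⟨σ₁, σ₂, hσ₁, hσ₂, hne, hτσ₁, hτσ₂⟩ :=
      X.exists_ne_of_mem_intrinsicInterior_support hk hdim_le hτ hx hv hφv hφ hxX
    exact ⟨σ₁, σ₂, hσ₁, hσ₂, hne, (hfacet hσ₁).2 hτσ₁, (hfacet hσ₂).2 hτσ₂, fun σ hσ hf =>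
      X.eq_or_eq_of_ne hk hτ hx hv hφv hφ hσ₁ hτσ₁ hσ₂ hτσ₂ hne hσ ((hfacet hσ).1 hf)⟩

end
end

section
/- Let V ⊆ ℝ^n be a linear subspace of dimension k ≥ 2 and W ⊂ V a linear subspace of dimension k − 1. Let ω be a nonzero alternating k-linear form on V, ω' a nonzero alternating (k−1)-linear form on W, and f a nonzero linear functional on V vanishing on W. If η₁, η₂ ∈ V satisfy f(η₁) > 0 and f(η₂) > 0, and (w₁,…,w_{k−1}) and (u₁,…,u_{k−1}) are bases of W, then sgn(ω(η₁, w₁, …, w_{k−1}))·sgn(ω'(w₁, …, w_{k−1})) = sgn(ω(η₂, u₁, …, u_{k−1}))·sgn(ω'(u₁, …, u_{k−1})). (In other words, the sign sign(τ,σ) attached to a facet of an oriented polytope is independent of the choice of basis of span(τ) and of the choice of inward-pointing normal vector.) -/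
/-!
Since `W ⊆ ker f` and both have dimension `m`, `W = ker f`; hence `f η₁ • η₂ - f η₂ • η₁ ∈ W`,
so `f η₁ * ω(η₂, u) = f η₂ * ω(η₁, u)` and the two normals give the same sign. Passing from the
basis `w` to `u` multiplies both `ω(η₁, ·)` and `ω'` by the same determinant `det_w u ≠ 0`, which
cancels in the product of signs.
-/

open Module Submodule

namespace Real

theorem sign_mul (x y : ℝ) : sign (x * y) = sign x * sign y := by
  rcases lt_trichotomy x 0 with hx | rfl | hx <;> rcases lt_trichotomy y 0 with hy | rfl | hy <;>
    simp [*, sign_of_pos, sign_of_neg, mul_pos_of_neg_of_neg, mul_neg_of_neg_of_pos,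
      mul_neg_of_pos_of_neg]

theorem sign_mul_of_pos {c : ℝ} (hc : 0 < c) (x : ℝ) : sign (c * x) = sign x := by
  rw [sign_mul, sign_of_pos hc, one_mul]

end Real

section

variable {K V N : Type*} [Field K] [AddCommGroup V] [Module K V] [AddCommGroup N] [Module K N]
  {m : ℕ}

theorem LinearIndependent.span_eq_ker_of_finrank_eq_succ {v : Fin m → V}
    (hv : LinearIndependent K v) {f : V →ₗ[K] K} (hf : f ≠ 0) (hfv : ∀ i, f (v i) = 0)
    (hV : finrank K V = m + 1) : span K (Set.range v) = LinearMap.ker f := by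
  have : FiniteDimensional K V := Module.finite_of_finrank_eq_succ hV
  refine eq_of_le_of_finrank_le (span_le.2 <| Set.range_subset_iff.2 hfv) ?_
  have hker : finrank K (LinearMap.ker f) < m + 1 :=
    hV ▸ finrank_lt fun h => hf (LinearMap.ker_eq_top.mp h)
  rw [finrank_span_eq_card hv, Fintype.card_fin]
  omega

namespace AlternatingMap

theorem map_cons_eq_zero_of_mem_span (ω : V [⋀^Fin (m + 1)]→ₗ[K] N) {v : Fin m → V} {z : V}
    (hz : z ∈ span K (Set.range v)) : ω (Fin.cons z v) = 0 :=
  ω.map_linearDependent _ fun h => (linearIndependent_finCons.mp h).2 hz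

theorem smul_map_cons_eq_of_ker_le_span (ω : V [⋀^Fin (m + 1)]→ₗ[K] N) {v : Fin m → V}
    {f : V →ₗ[K] K} (hf : LinearMap.ker f ≤ span K (Set.range v)) (x y : V) :
    f x • ω (Fin.cons y v) = f y • ω (Fin.cons x v) := by
  have hz : f x • y - f y • x ∈ LinearMap.ker f := by
    simp only [LinearMap.mem_ker, map_sub, map_smul, smul_eq_mul]
    ring
  have hcons (z : V) : ω (Fin.cons z v) = ω.curryLeft z v := rfl
  have := ω.map_cons_eq_zero_of_mem_span (hf hz)
  rwa [hcons, map_sub, map_smul, map_smul, sub_apply, smul_apply, smul_apply, ← hcons, ← hcons,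
    sub_eq_zero] at this

theorem map_eq_map_basis_mul_det {ι W : Type*} [Fintype ι] [DecidableEq ι] [AddCommGroup W]
    [Module K W] (G : W [⋀^ι]→ₗ[K] K) (b : Basis ι K W) (u : ι → W) :
    G u = G b * b.det u := by
  conv_lhs => rw [G.eq_smul_basis_det b]
  rfl

end AlternatingMap

end

theorem statement4_general {n m : ℕ}
    (V W : Submodule ℝ (Fin n → ℝ)) (hWV : W ≤ V)
    (hdV : Module.finrank ℝ ↥V = m + 1)
    (ω : AlternatingMap ℝ ↥V ℝ (Fin (m + 1)))
    (ω' : AlternatingMap ℝ ↥W ℝ (Fin m))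
    (f : ↥V →ₗ[ℝ] ℝ) (hfW : ∀ x : ↥W, f (Submodule.inclusion hWV x) = 0)
    (η₁ η₂ : ↥V) (hη₁ : 0 < f η₁) (hη₂ : 0 < f η₂)
    (w u : Fin m → ↥W)
    (hw : LinearIndependent ℝ w ∧ Submodule.span ℝ (Set.range w) = ⊤)
    (hu : LinearIndependent ℝ u ∧ Submodule.span ℝ (Set.range u) = ⊤) :
    Real.sign (ω (Fin.cons η₁ fun i => Submodule.inclusion hWV (w i))) *
        Real.sign (ω' w) =
      Real.sign (ω (Fin.cons η₂ fun i => Submodule.inclusion hWV (u i))) *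
        Real.sign (ω' u) := by
  set ι := Submodule.inclusion hWV
  let bw := Basis.mk hw.1 hw.2.ge
  set d := bw.det u
  have hd : d ≠ 0 := by
    simpa [Basis.coe_mk] using (bw.isUnit_det (Basis.mk hu.1 hu.2.ge)).ne_zero
  have hf : f ≠ 0 := by
    rintro rfl
    exact hη₁.ne' rfl
  have hker : LinearMap.ker f ≤ span ℝ (Set.range fun i => ι (u i)) :=
    ((hu.1.map' ι (ker_inclusion W V hWV)).span_eq_ker_of_finrank_eq_succ hf
      (fun i => hfW (u i)) hdV).ge
  have hη : f η₁ * ω (Fin.cons η₂ fun i => ι (u i)) = f η₂ * ω (Fin.cons η₁ fun i => ι (u i)) :=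
    ω.smul_map_cons_eq_of_ker_le_span hker η₁ η₂
  have hωu : ω (Fin.cons η₁ fun i => ι (u i)) = ω (Fin.cons η₁ fun i => ι (w i)) * d := by
    have h := ((ω.curryLeft η₁).compLinearMap ι).map_eq_map_basis_mul_det bw u
    rwa [Basis.coe_mk] at h
  have hω'u : ω' u = ω' w * d := by
    simpa [bw] using ω'.map_eq_map_basis_mul_det bw u
  have hsign : Real.sign (ω (Fin.cons η₂ fun i => ι (u i))) =
      Real.sign (ω (Fin.cons η₁ fun i => ι (u i))) := by
    rw [← Real.sign_mul_of_pos hη₁, hη, Real.sign_mul_of_pos hη₂]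
  rw [hsign, hωu, hω'u, ← Real.sign_mul, ← Real.sign_mul,
    show ∀ a b : ℝ, a * d * (b * d) = d * d * (a * b) from fun a b => by ring,
    Real.sign_mul_of_pos (mul_self_pos.2 hd)]

/-- The sign `sign(τ,σ)` attached to a facet of an oriented polytope is independent of the
choice of basis of `span τ` and of the choice of inward-pointing normal vector.  Here
`k = m + 1 ≥ 2`, `V` plays the role of `span σ` (dimension `k`), `W ⊂ V` the role of
`span τ` (dimension `k - 1`), `ω = ω_σ`, `ω' = ω_τ`, and `f` is a nonzero linear functional
vanishing on `W`, so that `f(η) > 0` singles out the inward-pointing side. -/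
theorem statement4 {n m : ℕ} (hm : 1 ≤ m)
    (V W : Submodule ℝ (Fin n → ℝ)) (hWV : W ≤ V)
    (hdV : Module.finrank ℝ ↥V = m + 1) (hdW : Module.finrank ℝ ↥W = m)
    (ω : AlternatingMap ℝ ↥V ℝ (Fin (m + 1))) (hω : ω ≠ 0)
    (ω' : AlternatingMap ℝ ↥W ℝ (Fin m)) (hω' : ω' ≠ 0)
    (f : ↥V →ₗ[ℝ] ℝ) (hf : f ≠ 0) (hfW : ∀ x : ↥W, f (Submodule.inclusion hWV x) = 0)
    (η₁ η₂ : ↥V) (hη₁ : 0 < f η₁) (hη₂ : 0 < f η₂)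
    (w u : Fin m → ↥W)
    (hw : LinearIndependent ℝ w ∧ Submodule.span ℝ (Set.range w) = ⊤)
    (hu : LinearIndependent ℝ u ∧ Submodule.span ℝ (Set.range u) = ⊤) :
    Real.sign (ω (Fin.cons η₁ fun i => Submodule.inclusion hWV (w i))) *
        Real.sign (ω' w) =
      Real.sign (ω (Fin.cons η₂ fun i => Submodule.inclusion hWV (u i))) *
        Real.sign (ω' u) :=
  statement4_general V W hWV hdV ω ω' f hfW η₁ η₂ hη₁ hη₂ w u hw hu
end

section
/- Let E ⊆ ℕ^n be up-closed (if α ∈ E and β ∈ ℕ^n with β_i ≥ α_i for all i, then β ∈ E) and suppose ℕ^n \ E is finite. Define the staircase T = ℝ₊^n \ ⋃_{α ∈ E} (α + ℝ₊^n), where ℝ₊ = [0,∞). Then T is the pairwise disjoint union ⋃_{α ∈ ℕ^n \ E} (α + [0,1)^n) of unit half-open cubes; in particular T is Lebesgue measurable and its Lebesgue measure equals the cardinality of ℕ^n \ E. -/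
open scoped ENNReal

noncomputable section

/-- The half-open unit cube `α + [0,1)^n`. -/
def unitCube {n : ℕ} (α : Fin n → ℕ) : Set (Fin n → ℝ) :=
  {x | ∀ i, (α i : ℝ) ≤ x i ∧ x i < α i + 1}

/-- The staircase `T = ℝ₊^n \ ⋃_{α ∈ E} (α + ℝ₊^n)`. -/
def staircaseOf {n : ℕ} (E : Set (Fin n → ℕ)) : Set (Fin n → ℝ) :=
  {x | ∀ i, 0 ≤ x i} \ ⋃ α ∈ E, {x : Fin n → ℝ | ∀ i, (α i : ℝ) ≤ x i}

/-! A point `x ≥ 0` lies in the cube `α + [0,1)^n` exactly when `α = ⌊x⌋₊`, and it lies above some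
`α ∈ E` exactly when `⌊x⌋₊` does. Hence for up-closed `E` the staircase is the set of `x ≥ 0` with
`⌊x⌋₊ ∉ E`, which is the disjoint union of the cubes indexed by `ℕⁿ \ E`, each of volume one. -/

open Function MeasureTheory Set

namespace unitCube

variable {n : ℕ}

theorem mem_iff_floor {α : Fin n → ℕ} {x : Fin n → ℝ} :
    x ∈ unitCube α ↔ (∀ i, 0 ≤ x i) ∧ (fun i => ⌊x i⌋₊) = α := by
  simp only [unitCube, mem_ofPred_eq, funext_iff]
  constructor
  · intro hx
    have hpos i : 0 ≤ x i := (Nat.cast_nonneg _).trans (hx i).1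
    exact ⟨hpos, fun i => (Nat.floor_eq_iff (hpos i)).2 (hx i)⟩
  · rintro ⟨hpos, hfloor⟩ i
    exact (Nat.floor_eq_iff (hpos i)).1 (hfloor i)

theorem pairwise_disjoint : Pairwise (Disjoint on unitCube (n := n)) :=
  fun _ _ hne => disjoint_left.2 fun _ hα hβ =>
    hne ((mem_iff_floor.1 hα).2.symm.trans (mem_iff_floor.1 hβ).2)

theorem eq_pi (α : Fin n → ℕ) :
    unitCube α = univ.pi fun i => Ico (α i : ℝ) (α i + 1) := by
  ext x
  simp [unitCube]

theorem measurableSet (α : Fin n → ℕ) : MeasurableSet (unitCube α) := by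
  rw [eq_pi]
  exact .univ_pi fun _ => measurableSet_Ico

theorem volume_eq_one (α : Fin n → ℕ) : volume (unitCube α) = 1 := by
  simp [eq_pi, volume_pi_pi, Real.volume_Ico]

theorem volume_biUnion {s : Set (Fin n → ℕ)} (hs : s.Finite) :
    volume (⋃ α ∈ s, unitCube α) = s.ncard := by
  rw [← hs.coe_toFinset, Finset.set_biUnion_coe,
    measure_biUnion_finset (pairwise_disjoint.pairwiseDisjoint _) fun α _ => measurableSet α]
  simp [volume_eq_one, ncard_eq_toFinset_card s hs]

end unitCube

theorem mem_staircaseOf_iff_floor {n : ℕ} {E : Set (Fin n → ℕ)} (hE : IsUpperSet E)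
    {x : Fin n → ℝ} : x ∈ staircaseOf E ↔ (∀ i, 0 ≤ x i) ∧ (fun i => ⌊x i⌋₊) ∉ E := by
  simp only [staircaseOf, mem_sdiff, mem_ofPred_eq, mem_iUnion, exists_prop, not_exists, not_and]
  exact and_congr_right fun hpos => ⟨fun h hE' => h _ hE' fun i => Nat.floor_le (hpos i),
    fun h α hα hle => h (hE (fun i => Nat.le_floor (hle i)) hα)⟩

theorem staircaseOf_eq_biUnion_unitCube {n : ℕ} {E : Set (Fin n → ℕ)} (hE : IsUpperSet E) :
    staircaseOf E = ⋃ α ∈ Eᶜ, unitCube α := by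
  ext x
  simp only [mem_staircaseOf_iff_floor hE, mem_iUnion, unitCube.mem_iff_floor, mem_compl_iff,
    exists_prop]
  exact ⟨fun ⟨hpos, hfloor⟩ => ⟨_, hfloor, hpos, rfl⟩,
    fun ⟨_, hα, hpos, hfloor⟩ => ⟨hpos, hfloor ▸ hα⟩⟩

theorem statement9 {n : ℕ} (E : Set (Fin n → ℕ))
    (hup : ∀ α ∈ E, ∀ β : Fin n → ℕ, (∀ i, α i ≤ β i) → β ∈ E)
    (hfin : Eᶜ.Finite) :
    staircaseOf E = (⋃ α ∈ Eᶜ, unitCube α) ∧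
    Eᶜ.PairwiseDisjoint unitCube ∧
    MeasurableSet (staircaseOf E) ∧
    MeasureTheory.volume (staircaseOf E) = (Eᶜ.ncard : ℝ≥0∞) := by
  have hstair := staircaseOf_eq_biUnion_unitCube fun α β hle hα => hup α hα β hle
  refine ⟨hstair, unitCube.pairwise_disjoint.pairwiseDisjoint _, ?_, ?_⟩
  · rw [hstair]
    exact hfin.measurableSet_biUnion fun α _ => unitCube.measurableSet α
  · rw [hstair, unitCube.volume_biUnion hfin]

end
end
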